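/- Let g_1, …, g_k be pairwise distinct monic irreducible polynomials in F_q[X] with nonzero constant terms, let b_i ≥ 1, set n_i' = b_i·deg(g_i) and n = n_1' + ⋯ + n_k'. For each i and each a ∈ F_q^{n_i'}, let seq_i(a) denote the unique sequence in Ω(g_i^{b_i}) whose first n_i' entries equal a. Then the F_q-linear map F_q^{n_1'} × ⋯ × F_q^{n_k'} → F_q^n sending (a_1, …, a_k) to the vector of the first n entries of seq_1(a_1) + ⋯ + seq_k(a_k) is a linear isomorphism (equivalently, the associated n × n matrix P over F_q has full rank n). -/

import Mathlib

/-!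
A sequence annihilated by `f(L)`, for `f` monic of degree `d`, satisfies a linear recurrence of
order `d`, so it is determined by its first `d` terms and every choice of them occurs. The
polynomials `gᵢ ^ bᵢ` are pairwise coprime, hence the kernels of the operators `gᵢ(L) ^ bᵢ` are
independent. The sum `∑ seqᵢ(aᵢ)` is annihilated by `∏ gᵢ ^ bᵢ`, of degree `n`; if its first `n`
terms vanish it is therefore zero, so every `seqᵢ(aᵢ)` and every `aᵢ` vanishes. The map is thus
injective between spaces of the same dimension `n`.
-/

open Polynomial

/-- The (left) shift operator `L` on sequences over `F`, as an `F`-linear endomorphism. -/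
def shiftL (F : Type*) [CommSemiring F] : Module.End F (ℕ → F) where
  toFun s := fun i => s (i + 1)
  map_add' _ _ := rfl
  map_smul' _ _ := rfl

/-- For a polynomial `f`, the operator `f(L)` on sequences. -/
noncomputable def polyL {F : Type*} [CommSemiring F] (f : Polynomial F) :
    Module.End F (ℕ → F) :=
  Polynomial.aeval (shiftL F) f

/-- `Ω(f)`: the set of sequences annihilated by `f(L)`. -/
def OmegaSet {F : Type*} [CommSemiring F] (f : Polynomial F) : Set (ℕ → F) :=
  {s | polyL f s = 0}

/-- Two sequences are shift equivalent if one is a shift of the other. -/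
def ShiftEquiv {F : Type*} [CommSemiring F] (s s' : ℕ → F) : Prop :=
  ∃ ℓ : ℕ, s' = (shiftL F ^ ℓ) s

/-- The cycle (shift-equivalence class) of a sequence. -/
def seqCycle {F : Type*} [CommSemiring F] (s : ℕ → F) : Set (ℕ → F) :=
  {s' | ∃ ℓ : ℕ, s' = (shiftL F ^ ℓ) s}

/-- `N` is the least period of the sequence `s`. -/
def IsLeastPeriod {F : Type*} (s : ℕ → F) (N : ℕ) : Prop :=
  0 < N ∧ (∀ i, s (i + N) = s i) ∧ ∀ M : ℕ, 0 < M → (∀ i, s (i + M) = s i) → N ≤ M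

/-- `h` is the minimal polynomial of the sequence `s`: it is monic, annihilates `s`,
and divides every polynomial annihilating `s`. -/
def IsMinPolyOfSeq {F : Type*} [CommSemiring F] (s : ℕ → F) (h : Polynomial F) : Prop :=
  h.Monic ∧ polyL h s = 0 ∧ ∀ h' : Polynomial F, polyL h' s = 0 → h ∣ h'

/-- `e = ord(f)`: the least `N ≥ 1` with `f ∣ X^N - 1`. -/
def IsOrderOf {F : Type*} [CommRing F] (f : Polynomial F) (e : ℕ) : Prop :=
  0 < e ∧ f ∣ X ^ e - 1 ∧ ∀ N : ℕ, 0 < N → f ∣ X ^ N - 1 → e ≤ N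

open Function

theorem Polynomial.isCoprime_of_monic_of_irreducible {K : Type*} [Field K] {p q : K[X]}
    (hp : p.Monic) (hq : q.Monic) (hpi : Irreducible p) (hqi : Irreducible q) (hne : p ≠ q) :
    IsCoprime p q := by
  rw [hpi.coprime_iff_not_dvd]
  exact fun h => hne (eq_of_monic_of_associated hp hq (hpi.associated_of_dvd hqi h))

theorem Polynomial.iSupIndep_ker_aeval_of_pairwise_isCoprime {R M ι : Type*} [CommRing R]
    [AddCommGroup M] [Module R M] (T : Module.End R M) {f : ι → R[X]}
    (hf : Pairwise (IsCoprime on f)) :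
    iSupIndep fun i => LinearMap.ker (aeval T (f i)) := by
  classical
  rw [iSupIndep_iff_finsetSum_eq_zero_imp_eq_zero]
  intro s v hv hsum i hi
  have hQ : aeval T (∏ j ∈ s.erase i, f j) (v i) = 0 := by
    rw [← s.add_sum_erase v hi, add_eq_zero_iff_eq_neg] at hsum
    rw [hsum, map_neg, map_sum, Finset.sum_eq_zero, neg_zero]
    intro j hj
    obtain ⟨r, hr⟩ := Finset.dvd_prod_of_mem f hj
    rw [hr, mul_comm, aeval_mul, Module.End.mul_apply,
      LinearMap.mem_ker.1 (hv j (Finset.mem_of_mem_erase hj)), map_zero]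
  have hcop : IsCoprime (f i) (∏ j ∈ s.erase i, f j) :=
    IsCoprime.prod_right fun j hj => hf (Finset.ne_of_mem_erase hj).symm
  exact Submodule.disjoint_def.1 (disjoint_ker_aeval_of_isCoprime T hcop) _ (hv i hi) hQ

section Sequences

variable {R : Type*}

section CommSemiring

variable [CommSemiring R]

theorem shiftL_pow_apply (t : ℕ) (s : ℕ → R) (i : ℕ) : (shiftL R ^ t) s i = s (i + t) := by
  induction t generalizing s i with
  | zero => rfl
  | succ t ih => rw [pow_succ, Module.End.mul_apply, ih]; rfl

theorem polyL_apply (f : R[X]) (s : ℕ → R) (i : ℕ) :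
    polyL f s i = ∑ t ∈ Finset.range (f.natDegree + 1), f.coeff t * s (i + t) := by
  simp only [polyL, aeval_eq_sum_range, LinearMap.coe_sum, Finset.sum_apply,
    LinearMap.smul_apply, Pi.smul_apply, shiftL_pow_apply, smul_eq_mul]

theorem mem_omegaSet_of_dvd {p q : R[X]} (h : p ∣ q) {s : ℕ → R} (hs : s ∈ OmegaSet p) :
    s ∈ OmegaSet q := by
  obtain ⟨r, rfl⟩ := h
  change aeval (shiftL R) (p * r) s = 0
  rw [mul_comm, aeval_mul, Module.End.mul_apply]
  exact (congrArg _ hs).trans (map_zero _)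

end CommSemiring

variable [CommRing R] {f : R[X]} {d : ℕ}

/-- For `f` monic of degree `d`, `f(L) s = 0` unfolds to
`s (i + d) = ∑ j < d, -f.coeff j * s (i + j)`. -/
def recurrenceOf (f : R[X]) (d : ℕ) : LinearRecurrence R :=
  ⟨d, fun j => -f.coeff j⟩

theorem isSolution_recurrenceOf_iff (hf : f.Monic) (hd : f.natDegree = d) {s : ℕ → R} :
    (recurrenceOf f d).IsSolution s ↔ s ∈ OmegaSet f := by
  subst hd
  change (∀ i, s (i + f.natDegree) = ∑ j : Fin f.natDegree, -f.coeff j * s (i + j)) ↔ polyL f s = 0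
  simp only [funext_iff, Pi.zero_apply, polyL_apply, Finset.sum_range_succ, hf.coeff_natDegree,
    one_mul, neg_mul, Finset.sum_neg_distrib, Finset.sum_range, eq_neg_iff_add_eq_zero,
    add_comm (s _)]

/-- The paper's `seq(a)`, when `f` is monic of degree `d`. -/
def omegaSeq (f : R[X]) (d : ℕ) : (Fin d → R) →ₗ[R] ℕ → R :=
  (recurrenceOf f d).solSpace.subtype ∘ₗ (recurrenceOf f d).toInit.symm.toLinearMap

theorem omegaSeq_apply_val (a : Fin d → R) (j : Fin d) : omegaSeq f d a j = a j :=
  (recurrenceOf f d).mkSol_eq_init a j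

theorem omegaSeq_injective : Function.Injective (omegaSeq f d) := fun a a' h =>
  funext fun j => by rw [← omegaSeq_apply_val a, h, omegaSeq_apply_val]

theorem omegaSeq_mem (hf : f.Monic) (hd : f.natDegree = d) (a : Fin d → R) :
    omegaSeq f d a ∈ OmegaSet f :=
  (isSolution_recurrenceOf_iff hf hd).1 ((recurrenceOf f d).is_sol_mkSol a)

theorem eq_omegaSeq (hf : f.Monic) (hd : f.natDegree = d) {s : ℕ → R} (hs : s ∈ OmegaSet f)
    {a : Fin d → R} (ha : ∀ j : Fin d, s j = a j) : s = omegaSeq f d a :=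
  (recurrenceOf f d).eq_mk_of_is_sol_of_eq_init' ((isSolution_recurrenceOf_iff hf hd).2 hs) ha

theorem eq_zero_of_mem_omegaSet (hf : f.Monic) (hd : f.natDegree = d) {s : ℕ → R}
    (hs : s ∈ OmegaSet f) (h : ∀ j < d, s j = 0) : s = 0 := by
  simpa using eq_omegaSeq hf hd hs (a := 0) fun j => h j j.2

end Sequences

section TruncatedSum

variable {K ι : Type*} [CommRing K] [Fintype ι] (f : ι → K[X]) (d : ι → ℕ) (n : ℕ)

def truncatedSum : ((i : ι) → Fin (d i) → K) →ₗ[K] Fin n → K :=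
  LinearMap.funLeft K K Fin.val ∘ₗ ∑ i, omegaSeq (f i) (d i) ∘ₗ LinearMap.proj i

theorem truncatedSum_apply (a : (i : ι) → Fin (d i) → K) (j : Fin n) :
    truncatedSum f d n a j = ∑ i, omegaSeq (f i) (d i) (a i) j := by
  simp [truncatedSum, LinearMap.funLeft_apply]

variable {f d n}

theorem truncatedSum_injective (hf : ∀ i, (f i).Monic)
    (hd : ∀ i, (f i).natDegree = d i) (hcop : Pairwise (IsCoprime on f)) (hn : n = ∑ i, d i) :
    Injective (truncatedSum f d n) := by
  rw [← LinearMap.ker_eq_bot, LinearMap.ker_eq_bot']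
  intro a ha
  set s := fun i => omegaSeq (f i) (d i) (a i)
  have hs : ∀ i, s i ∈ OmegaSet (f i) := fun i => omegaSeq_mem (hf i) (hd i) (a i)
  have hsum_mem : ∑ i, s i ∈ OmegaSet (∏ i, f i) := by
    change polyL _ _ = 0
    rw [map_sum]
    exact Finset.sum_eq_zero fun i hi => mem_omegaSet_of_dvd (Finset.dvd_prod_of_mem f hi) (hs i)
  have hdeg : (∏ i, f i).natDegree = n := by
    rw [natDegree_prod_of_monic _ _ fun i _ => hf i, hn]
    exact Finset.sum_congr rfl fun i _ => hd i
  have hsum : ∑ i, s i = 0 :=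
    eq_zero_of_mem_omegaSet (monic_prod_of_monic _ _ fun i _ => hf i) hdeg hsum_mem fun j hj => by
      have hj' := congrFun ha ⟨j, hj⟩
      rw [truncatedSum_apply, ← Finset.sum_apply] at hj'
      simpa only [s, Pi.zero_apply] using hj'
  have hs0 : ∀ i, s i = 0 := fun i =>
    (iSupIndep_iff_finsetSum_eq_zero_imp_eq_zero _).1
      (iSupIndep_ker_aeval_of_pairwise_isCoprime (shiftL K) hcop) Finset.univ s
      (fun i _ => hs i) hsum i (Finset.mem_univ i)
  funext i
  apply omegaSeq_injective (f := f i)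
  rw [Pi.zero_apply, map_zero]
  exact hs0 i

end TruncatedSum

theorem truncatedSum_bijective {K ι : Type*} [Field K] [Fintype ι] {f : ι → K[X]} {d : ι → ℕ}
    {n : ℕ} (hf : ∀ i, (f i).Monic)
    (hd : ∀ i, (f i).natDegree = d i) (hcop : Pairwise (IsCoprime on f)) (hn : n = ∑ i, d i) :
    Bijective (truncatedSum f d n) := by
  have hrank : Module.finrank K ((i : ι) → Fin (d i) → K) = Module.finrank K (Fin n → K) := by
    simp [Module.finrank_pi_fintype, hn]
  have hinj := truncatedSum_injective hf hd hcop hn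
  exact ⟨hinj, (LinearMap.injective_iff_surjective_of_finrank_eq_finrank hrank).1 hinj⟩

theorem stmt15_general {F : Type*} [Field F] (k : ℕ)
    (g : Fin k → Polynomial F) (b : Fin k → ℕ)
    (hmonic : ∀ i, (g i).Monic) (hirr : ∀ i, Irreducible (g i))
    (hdist : Function.Injective g)
    (n' : Fin k → ℕ) (hn' : ∀ i, n' i = b i * (g i).natDegree)
    (n : ℕ) (hn : n = ∑ i, n' i) :
    ∃ Φ : ((i : Fin k) → (Fin (n' i) → F)) ≃ₗ[F] (Fin n → F),
      ∀ (a : (i : Fin k) → (Fin (n' i) → F)) (s : Fin k → (ℕ → F)),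
        (∀ i, s i ∈ OmegaSet ((g i) ^ (b i)) ∧ ∀ j : Fin (n' i), s i j.1 = a i j) →
        ∀ j : Fin n, Φ a j = (∑ i, s i) j.1 := by
  set f := fun i => g i ^ b i
  have hfm : ∀ i, (f i).Monic := fun i => (hmonic i).pow (b i)
  have hfd : ∀ i, (f i).natDegree = n' i := fun i => by rw [natDegree_pow, hn' i]
  have hcop : Pairwise (IsCoprime on f) := fun i j hij =>
    (isCoprime_of_monic_of_irreducible (hmonic i) (hmonic j) (hirr i) (hirr j) (hdist.ne hij)).pow
  refine ⟨.ofBijective _ (truncatedSum_bijective hfm hfd hcop hn), fun a s hs j => ?_⟩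
  rw [LinearEquiv.ofBijective_apply, truncatedSum_apply, Finset.sum_apply]
  exact Finset.sum_congr rfl fun i _ => by rw [← eq_omegaSeq (hfm i) (hfd i) (hs i).1 (hs i).2]

/-- the `F_q`-linear map sending a tuple of initial states
`(a₁, …, a_k) ∈ F_q^{n₁'} × ⋯ × F_q^{n_k'}` to the first `n` entries of
`seq₁(a₁) + ⋯ + seq_k(a_k)` is a linear isomorphism, where `seqᵢ(aᵢ)` is the unique
sequence of `Ω(gᵢ^{bᵢ})` whose first `nᵢ'` entries are `aᵢ`. -/
theorem stmt15 {F : Type*} [Field F] [Fintype F] (k : ℕ)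
    (g : Fin k → Polynomial F) (b : Fin k → ℕ)
    (hmonic : ∀ i, (g i).Monic) (hirr : ∀ i, Irreducible (g i))
    (hg0 : ∀ i, (g i).coeff 0 ≠ 0) (hdist : Function.Injective g)
    (hb : ∀ i, 1 ≤ b i)
    (n' : Fin k → ℕ) (hn' : ∀ i, n' i = b i * (g i).natDegree)
    (n : ℕ) (hn : n = ∑ i, n' i) :
    ∃ Φ : ((i : Fin k) → (Fin (n' i) → F)) ≃ₗ[F] (Fin n → F),
      ∀ (a : (i : Fin k) → (Fin (n' i) → F)) (s : Fin k → (ℕ → F)),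
        (∀ i, s i ∈ OmegaSet ((g i) ^ (b i)) ∧ ∀ j : Fin (n' i), s i j.1 = a i j) →
        ∀ j : Fin n, Φ a j = (∑ i, s i) j.1 :=
  stmt15_general k g b hmonic hirr hdist n' hn' n hn
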